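/- arXiv:2404.02251 — 5 statements merged into one kernel-verified Lean document; each statement's English description precedes it below -/
import Mathlib

section
/- Let s : ℕ → {-1, 1} be a binary sequence, let T, M, k be positive integers with k even, and let θ ≥ 0 be a bound on all combined correlations of s of order at most k, i.e. for every 1 ≤ r ≤ k, every stride L ≥ 1, every tuple of shifts 0 ≤ d'_1 < ⋯ < d'_r, and every length T' ≤ T, one has |∑_{i=1}^{T'} s(L·i + d'_1) ⋯ s(L·i + d'_r)| ≤ θ. Then (1/T) · ∑_{i=1}^{T} ( ∑_{n=1}^{M} s(i + n) )^k ≤ (M·(k-1))^{k/2} + M^k · θ / T. -/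
open Finset

/-- multiplicity of value `n` in tuple `f` -/
def mult {k : ℕ} (f : Fin k → ℕ) (n : ℕ) : ℕ :=
  (univ.filter fun j => f j = n).card

/-- tuples with all multiplicities even -/
noncomputable def evenT (k M : ℕ) : Finset (Fin k → ℕ) :=
  @Finset.filter _ (fun f => ∀ n, Even (mult f n)) (Classical.decPred _)
    (Fintype.piFinset fun _ : Fin k => Finset.Icc 1 M)

lemma mem_evenT {k M : ℕ} {f : Fin k → ℕ} :
    f ∈ evenT k M ↔ (∀ j, f j ∈ Finset.Icc 1 M) ∧ ∀ n, Even (mult f n) := by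
  classical
  simp [evenT, Fintype.mem_piFinset]

-- fiber decomposition under deleting two positions
lemma mult_delete {k : ℕ} (f : Fin (k+2) → ℕ) (j : Fin (k+1))
    (hj : f j.castSucc = f (Fin.last (k+1))) (n : ℕ) :
    mult f n = mult (fun i : Fin k => f ((j.succAbove i).castSucc)) n
      + (if n = f (Fin.last (k+1)) then 2 else 0) := by
  classical
  set φ : Fin k → Fin (k+2) := fun i => (j.succAbove i).castSucc with hφ
  have hφinj : Function.Injective φ := fun a b hab => by
    apply j.succAbove_right_injective
    exact Fin.castSucc_injective _ hab
  have himg : (univ : Finset (Fin (k+2))) =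
      (univ.image φ) ∪ {j.castSucc, Fin.last (k+1)} := by
    apply Finset.ext
    intro x
    simp only [mem_union, mem_image, mem_univ, mem_insert, mem_singleton, true_iff]
    rcases Fin.eq_castSucc_or_eq_last x with ⟨y, rfl⟩ | rfl
    · by_cases hy : y = j
      · exact Or.inr (Or.inl (by rw [hy]))
      · obtain ⟨i, hi⟩ := Fin.exists_succAbove_eq (Ne.symm hy).symm
        exact Or.inl ⟨i, trivial, by rw [hφ]; simp [hi]⟩
    · exact Or.inr (Or.inr rfl)
  have hdisj : Disjoint (univ.image φ) ({j.castSucc, Fin.last (k+1)} : Finset (Fin (k+2))) := by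
    simp only [Finset.disjoint_left, mem_image, mem_insert, mem_singleton]
    rintro x ⟨i, -, rfl⟩ h
    rcases h with h | h
    · exact j.succAbove_ne i (Fin.castSucc_injective _ h)
    · exact (Fin.castSucc_lt_last _).ne h
  have hmult : mult f n = ((univ.image φ).filter fun x => f x = n).card
      + (({j.castSucc, Fin.last (k+1)} : Finset (Fin (k+2))).filter fun x => f x = n).card := by
    rw [mult, himg, filter_union, card_union_of_disjoint (disjoint_filter_filter hdisj)]
  have h1 : ((univ.image φ).filter fun x => f x = n).card
      = mult (fun i : Fin k => f (φ i)) n := by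
    rw [filter_image, card_image_of_injective _ hφinj, mult]
  have hne : j.castSucc ≠ Fin.last (k+1) := (Fin.castSucc_lt_last _).ne
  have h2 : (({j.castSucc, Fin.last (k+1)} : Finset (Fin (k+2))).filter fun x => f x = n).card
      = (if n = f (Fin.last (k+1)) then 2 else 0) := by
    by_cases hn : n = f (Fin.last (k+1))
    · rw [if_pos hn]
      rw [filter_insert, if_pos (by rw [hj, hn]), filter_singleton, if_pos hn.symm]
      rw [card_insert_of_notMem (by simp [hne]), card_singleton]
    · rw [if_neg hn]
      rw [filter_insert, if_neg (by rw [hj]; exact fun h => hn h.symm),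
        filter_singleton, if_neg (fun h => hn h.symm), card_empty]
  rw [hmult, h1, h2]

lemma evenT_step (M k : ℕ) :
    (evenT (k+2) M).card ≤ M * ((k+1) * (evenT k M).card) := by
  classical
  have key : (evenT (k+2) M).card ≤
      ((Finset.Icc 1 M) ×ˢ ((univ : Finset (Fin (k+1))) ×ˢ evenT k M)).card := by
    set enc : (Fin (k+2) → ℕ) → ℕ × (Fin (k+1)) × (Fin k → ℕ) := fun f =>
      if h : (univ.filter fun j : Fin (k+1) => f j.castSucc = f (Fin.last (k+1))).Nonempty then
        let j := (univ.filter fun j : Fin (k+1) => f j.castSucc = f (Fin.last (k+1))).min' h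
        (f (Fin.last (k+1)), j, fun i => f ((j.succAbove i).castSucc))
      else (f (Fin.last (k+1)), 0, fun _ => 0) with henc
    -- nonemptiness of the fiber set, for members of evenT
    have hNE : ∀ f ∈ evenT (k+2) M,
        (univ.filter fun j : Fin (k+1) => f j.castSucc = f (Fin.last (k+1))).Nonempty := by
      intro f hf
      obtain ⟨hmem, hev⟩ := mem_evenT.mp hf
      set v := f (Fin.last (k+1)) with hv
      have h1 : Fin.last (k+1) ∈ (univ.filter fun x : Fin (k+2) => f x = v) := by
        simp [hv]
      have hcard : 2 ≤ mult f v := by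
        have := hev v
        have hpos : 0 < mult f v := card_pos.mpr ⟨_, h1⟩
        rcases this with ⟨c, hc⟩
        omega
      have h2 : ∃ x, x ∈ (univ.filter fun x : Fin (k+2) => f x = v) ∧ x ≠ Fin.last (k+1) := by
        by_contra hcon
        push_neg at hcon
        have : (univ.filter fun x : Fin (k+2) => f x = v) ⊆ {Fin.last (k+1)} := by
          intro x hx
          simp only [mem_singleton]
          exact hcon x hx
        have := card_le_card this
        simp only [card_singleton] at this
        rw [mult] at hcard; omega
      obtain ⟨x, hx, hxne⟩ := h2
      rcases Fin.eq_castSucc_or_eq_last x with ⟨y, rfl⟩ | rfl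
      · exact ⟨y, by simp only [mem_filter, mem_univ, true_and]; exact (mem_filter.mp hx).2⟩
      · exact absurd rfl hxne
    apply Finset.card_le_card_of_injOn enc
    · intro f hf
      have hne := hNE f hf
      obtain ⟨hmem, hev⟩ := mem_evenT.mp hf
      set j := (univ.filter fun j : Fin (k+1) => f j.castSucc = f (Fin.last (k+1))).min' hne with hjdef
      have hjprop : f j.castSucc = f (Fin.last (k+1)) :=
        (mem_filter.mp (Finset.min'_mem _ hne)).2
      have : enc f = (f (Fin.last (k+1)), j, fun i => f ((j.succAbove i).castSucc)) := by
        rw [henc]; simp only [dif_pos hne]; rfl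
      rw [this]
      simp only [Finset.mem_coe, Finset.mem_product, mem_univ, true_and]
      refine ⟨hmem _, mem_evenT.mpr ⟨fun i => hmem _, ?_⟩⟩
      intro n
      have := mult_delete f j hjprop n
      have hevn := hev n
      rw [this] at hevn
      by_cases hn : n = f (Fin.last (k+1))
      · rw [if_pos hn] at hevn
        obtain ⟨c, hc⟩ := hevn
        exact ⟨c - 1, by omega⟩
      · rw [if_neg hn, Nat.add_zero] at hevn; exact hevn
    · intro f1 h1 f2 h2 he
      have hne1 := hNE f1 h1
      have hne2 := hNE f2 h2
      set j1 := (univ.filter fun j : Fin (k+1) => f1 j.castSucc = f1 (Fin.last (k+1))).min' hne1 with hj1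
      set j2 := (univ.filter fun j : Fin (k+1) => f2 j.castSucc = f2 (Fin.last (k+1))).min' hne2 with hj2
      have e1 : enc f1 = (f1 (Fin.last (k+1)), j1, fun i => f1 ((j1.succAbove i).castSucc)) := by
        rw [henc]; simp only [dif_pos hne1]; rfl
      have e2 : enc f2 = (f2 (Fin.last (k+1)), j2, fun i => f2 ((j2.succAbove i).castSucc)) := by
        rw [henc]; simp only [dif_pos hne2]; rfl
      rw [e1, e2] at he
      obtain ⟨hv, hj, hg⟩ : f1 (Fin.last (k+1)) = f2 (Fin.last (k+1)) ∧ j1 = j2 ∧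
          (fun i => f1 ((j1.succAbove i).castSucc)) = (fun i => f2 ((j2.succAbove i).castSucc)) := by
        simpa [Prod.ext_iff] using he
      have hj1prop : f1 j1.castSucc = f1 (Fin.last (k+1)) :=
        (mem_filter.mp (Finset.min'_mem _ hne1)).2
      have hj2prop : f2 j2.castSucc = f2 (Fin.last (k+1)) :=
        (mem_filter.mp (Finset.min'_mem _ hne2)).2
      funext x
      rcases Fin.eq_castSucc_or_eq_last x with ⟨y, rfl⟩ | rfl
      · by_cases hy : y = j1
        · rw [hy, hj1prop, hv, ← hj2prop, hj]
        · have : y ≠ j1 := hy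
          obtain ⟨i, hi⟩ := Fin.exists_succAbove_eq (Ne.symm this).symm
          have := congrFun hg i
          rw [← hi, this, hj]
      · rw [hv]
  calc (evenT (k+2) M).card ≤ _ := key
    _ = M * ((k+1) * (evenT k M).card) := by
        rw [Finset.card_product, Finset.card_product, Nat.card_Icc, card_univ,
          Fintype.card_fin]
        simp

lemma evenT_card_bound (M : ℕ) : ∀ m : ℕ, (evenT (2*m) M).card ≤ (M * (2*m - 1))^m := by
  intro m
  induction m with
  | zero =>
      simp only [Nat.mul_zero, pow_zero]
      have : (evenT 0 M) ⊆ {fun _ => 0} := by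
        intro f _
        simp only [mem_singleton]
        funext i; exact absurd i.2 (by omega)
      calc (evenT 0 M).card ≤ _ := card_le_card this
        _ = 1 := card_singleton _
  | succ m ih =>
      have h2 : 2 * (m + 1) = (2 * m) + 2 := by ring
      have hstep := evenT_step M (2 * m)
      have : (evenT (2*(m+1)) M).card = (evenT (2*m+2) M).card := by rw [h2]
      rw [this]
      calc (evenT (2*m+2) M).card ≤ M * ((2*m+1) * (evenT (2*m) M).card) := hstep
        _ ≤ M * ((2*m+1) * (M * (2*m - 1))^m) := by
            exact Nat.mul_le_mul_left _ (Nat.mul_le_mul_left _ ih)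
        _ ≤ M * ((2*m+1) * (M * (2*m + 1))^m) := by
            apply Nat.mul_le_mul_left
            apply Nat.mul_le_mul_left
            apply Nat.pow_le_pow_left
            apply Nat.mul_le_mul_left
            omega
        _ ≤ (M * (2*(m+1) - 1))^(m+1) := by
            have : 2*(m+1) - 1 = 2*m+1 := by omega
            rw [this, pow_succ]
            ring_nf
            exact Nat.le_refl _

-- reduction of a product over a tuple to product over odd-multiplicity values
lemma prod_reduce {k : ℕ} (s : ℕ → ℝ) (hs : ∀ i, s i = -1 ∨ s i = 1)
    (f : Fin k → ℕ) (i : ℕ) :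
    ∏ j : Fin k, s (i + f j)
      = ∏ n ∈ (univ.image f).filter (fun n => ¬ Even (mult f n)), s (i + n) := by
  classical
  have h1 : ∏ j : Fin k, s (i + f j)
      = ∏ n ∈ univ.image f, s (i + n) ^ (mult f n) :=
    Finset.prod_comp (fun n => s (i + n)) f
  have pm_pow : ∀ (x : ℝ), (x = -1 ∨ x = 1) → ∀ m : ℕ, x ^ m = if Even m then 1 else x := by
    intro x hx m
    have hx2 : x ^ 2 = 1 := by rcases hx with h | h <;> rw [h] <;> norm_num
    rcases Nat.even_or_odd m with ⟨c, hc⟩ | ⟨c, hc⟩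
    · rw [if_pos ⟨c, hc⟩, hc, ← two_mul, pow_mul, hx2, one_pow]
    · rw [if_neg (by rw [hc]; simp [Nat.even_add_one, parity_simps]), hc, pow_succ, pow_mul,
        hx2, one_pow, one_mul]
  rw [h1, Finset.prod_filter]
  apply Finset.prod_congr rfl
  intro n _
  rw [pm_pow _ (hs (i + n)) (mult f n)]
  by_cases h : Even (mult f n) <;> simp [h]

-- product over a finset via its order iso with Fin r
lemma prod_over_finset (s : ℕ → ℝ) (i : ℕ) (D : Finset ℕ) :
    ∏ j : Fin D.card, s (i + ((D.orderIsoOfFin rfl) j : ℕ)) = ∏ n ∈ D, s (i + n) := by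
  rw [← Finset.prod_coe_sort D (fun n => s (i + n))]
  exact Equiv.prod_comp (D.orderIsoOfFin rfl).toEquiv (fun x => s (i + (x : ℕ)))

/-- Let `s : ℕ → {-1, 1}` be a binary sequence, `T, M, k` positive
integers with `k` even, and `θ ≥ 0` a bound on all combined correlations of `s` of
order at most `k`. Then
`(1/T) · ∑_{i=1}^{T} (∑_{n=1}^{M} s(i+n))^k ≤ (M(k-1))^{k/2} + M^k θ / T`. -/
theorem moment_bound_even
    (s : ℕ → ℝ) (hs : ∀ i, s i = -1 ∨ s i = 1)
    (T M k : ℕ) (hT : 0 < T) (hM : 0 < M) (hk : 0 < k) (hkeven : Even k)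
    (θ : ℝ) (hθ : 0 ≤ θ)
    (hcorr : ∀ r : ℕ, 1 ≤ r → r ≤ k → ∀ L : ℕ, 1 ≤ L →
      ∀ d' : Fin r → ℕ, StrictMono d' → ∀ T' : ℕ, T' ≤ T →
        |∑ i ∈ Finset.Icc 1 T', ∏ j : Fin r, s (L * i + d' j)| ≤ θ) :
    (1 / (T : ℝ)) * ∑ i ∈ Finset.Icc 1 T, (∑ n ∈ Finset.Icc 1 M, s (i + n)) ^ k
      ≤ ((M : ℝ) * ((k : ℝ) - 1)) ^ ((k : ℝ) / 2) + (M : ℝ) ^ k * θ / (T : ℝ) := by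
  classical
  set P := Fintype.piFinset (fun _ : Fin k => Finset.Icc 1 M) with hP
  -- expansion
  have expand : ∑ i ∈ Finset.Icc 1 T, (∑ n ∈ Finset.Icc 1 M, s (i + n)) ^ k
      = ∑ f ∈ P, ∑ i ∈ Finset.Icc 1 T, ∏ j : Fin k, s (i + f j) := by
    rw [Finset.sum_comm]
    apply Finset.sum_congr rfl
    intro i _
    rw [← Fin.prod_const k (∑ n ∈ Finset.Icc 1 M, s (i + n)), Finset.prod_univ_sum]
  -- the inner sum for a fixed f
  have inner_bound_even : ∀ f ∈ P, (∀ n, Even (mult f n)) →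
      ∑ i ∈ Finset.Icc 1 T, ∏ j : Fin k, s (i + f j) = (T : ℝ) := by
    intro f hf hev
    have hD : (univ.image f).filter (fun n => ¬ Even (mult f n)) = ∅ := by
      apply Finset.filter_false_of_mem
      intro n _
      simp [hev n]
    have := fun i => prod_reduce s hs f i
    calc ∑ i ∈ Finset.Icc 1 T, ∏ j : Fin k, s (i + f j)
        = ∑ i ∈ Finset.Icc 1 T, (1 : ℝ) := by
          apply Finset.sum_congr rfl
          intro i _
          rw [this i, hD, Finset.prod_empty]
      _ = (T : ℝ) := by simp
  have inner_bound_odd : ∀ f ∈ P, ¬(∀ n, Even (mult f n)) →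
      ∑ i ∈ Finset.Icc 1 T, ∏ j : Fin k, s (i + f j) ≤ θ := by
    intro f hf hnev
    set D := (univ.image f).filter (fun n => ¬ Even (mult f n)) with hDdef
    have hDne : D.Nonempty := by
      push_neg at hnev
      obtain ⟨n, hn⟩ := hnev
      have hnim : n ∈ univ.image f := by
        by_contra hc
        apply hn
        have : (univ.filter fun j => f j = n) = ∅ := by
          apply Finset.filter_false_of_mem
          intro j _ hj
          exact hc (Finset.mem_image.mpr ⟨j, Finset.mem_univ j, hj⟩)
        rw [mult, this]; simp
      exact ⟨n, Finset.mem_filter.mpr ⟨hnim, hn⟩⟩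
    set r := D.card with hr
    have hr1 : 1 ≤ r := Finset.card_pos.mpr hDne
    have hrk : r ≤ k := by
      calc r ≤ (univ.image f).card := Finset.card_filter_le _ _
        _ ≤ (univ : Finset (Fin k)).card := Finset.card_image_le
        _ = k := by simp
    set d' : Fin r → ℕ := fun j => ((D.orderIsoOfFin rfl) j : ℕ) with hd'
    have hmono : StrictMono d' := by
      intro a b hab
      exact Subtype.coe_lt_coe.mpr ((D.orderIsoOfFin rfl).strictMono hab)
    have hcor := hcorr r hr1 hrk 1 le_rfl d' hmono T le_rfl
    have heq : ∀ i : ℕ, ∏ j : Fin k, s (i + f j) = ∏ j : Fin r, s (1 * i + d' j) := by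
      intro i
      rw [prod_reduce s hs f i, ← hDdef, ← prod_over_finset s i D]
      simp [hd']; rfl
    calc ∑ i ∈ Finset.Icc 1 T, ∏ j : Fin k, s (i + f j)
        = ∑ i ∈ Finset.Icc 1 T, ∏ j : Fin r, s (1 * i + d' j) := by
          exact Finset.sum_congr rfl (fun i _ => heq i)
      _ ≤ |∑ i ∈ Finset.Icc 1 T, ∏ j : Fin r, s (1 * i + d' j)| := le_abs_self _
      _ ≤ θ := hcor
  -- split
  have key : ∑ f ∈ P, ∑ i ∈ Finset.Icc 1 T, ∏ j : Fin k, s (i + f j)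
      ≤ ((evenT k M).card : ℝ) * T + (M : ℝ) ^ k * θ := by
    rw [← Finset.sum_filter_add_sum_filter_not P (fun f => ∀ n, Even (mult f n))]
    have hub1 : ∑ f ∈ P.filter (fun f => ∀ n, Even (mult f n)),
        ∑ i ∈ Finset.Icc 1 T, ∏ j : Fin k, s (i + f j)
        = ((evenT k M).card : ℝ) * T := by
      rw [Finset.sum_congr rfl (fun f hf => inner_bound_even f (Finset.mem_filter.mp hf).1
        (Finset.mem_filter.mp hf).2)]
      rw [Finset.sum_const, nsmul_eq_mul]
      have hset : P.filter (fun f => ∀ n, Even (mult f n)) = evenT k M := by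
        ext f
        simp only [Finset.mem_filter, mem_evenT, hP, Fintype.mem_piFinset]
      rw [hset]
    have hub2 : ∑ f ∈ P.filter (fun f => ¬∀ n, Even (mult f n)),
        ∑ i ∈ Finset.Icc 1 T, ∏ j : Fin k, s (i + f j)
        ≤ (M : ℝ) ^ k * θ := by
      calc ∑ f ∈ P.filter (fun f => ¬∀ n, Even (mult f n)),
            ∑ i ∈ Finset.Icc 1 T, ∏ j : Fin k, s (i + f j)
          ≤ ∑ f ∈ P.filter (fun f => ¬∀ n, Even (mult f n)), θ := by
            apply Finset.sum_le_sum
            intro f hf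
            exact inner_bound_odd f (Finset.mem_filter.mp hf).1 (Finset.mem_filter.mp hf).2
        _ = ((P.filter (fun f => ¬∀ n, Even (mult f n))).card : ℝ) * θ := by
            rw [Finset.sum_const, nsmul_eq_mul]
        _ ≤ (M : ℝ) ^ k * θ := by
            apply mul_le_mul_of_nonneg_right _ hθ
            have h1 : (P.filter (fun f => ¬∀ n, Even (mult f n))).card ≤ P.card :=
              Finset.card_filter_le _ _
            have h2 : P.card = M ^ k := by
              rw [hP, Fintype.card_piFinset]
              simp [Nat.card_Icc]
            calc ((P.filter (fun f => ¬∀ n, Even (mult f n))).card : ℝ)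
                ≤ (P.card : ℝ) := by exact_mod_cast h1
              _ = (M : ℝ) ^ k := by rw [h2]; push_cast; ring
    linarith
  -- count bound, cast to ℝ
  obtain ⟨m, hm⟩ := hkeven
  have hk2m : k = 2 * m := by omega
  have hm1 : 1 ≤ m := by omega
  have hcount : ((evenT k M).card : ℝ) ≤ ((M : ℝ) * ((k : ℝ) - 1)) ^ ((k : ℝ) / 2) := by
    have hb := evenT_card_bound M m
    rw [← hk2m] at hb
    have hcast : (((M * (k - 1)) ^ m : ℕ) : ℝ) = ((M : ℝ) * ((k : ℝ) - 1)) ^ m := by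
      push_cast [Nat.cast_sub hk]
      ring
    have h1 : ((evenT k M).card : ℝ) ≤ ((M : ℝ) * ((k : ℝ) - 1)) ^ m := by
      rw [← hcast]; exact_mod_cast hb
    have h2 : ((M : ℝ) * ((k : ℝ) - 1)) ^ ((k : ℝ) / 2)
        = ((M : ℝ) * ((k : ℝ) - 1)) ^ m := by
      have : (k : ℝ) / 2 = (m : ℕ) := by
        rw [hk2m]; push_cast; ring
      rw [this, Real.rpow_natCast]
    rw [h2]
    exact h1
  -- final arithmetic
  have hTpos : (0 : ℝ) < T := by exact_mod_cast hT
  rw [expand] at *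
  have step : (1 / (T : ℝ)) * ∑ f ∈ P, ∑ i ∈ Finset.Icc 1 T, ∏ j : Fin k, s (i + f j)
      ≤ (1 / (T : ℝ)) * (((evenT k M).card : ℝ) * T + (M : ℝ) ^ k * θ) := by
    apply mul_le_mul_of_nonneg_left key
    positivity
  calc (1 / (T : ℝ)) * ∑ f ∈ P, ∑ i ∈ Finset.Icc 1 T, ∏ j : Fin k, s (i + f j)
      ≤ (1 / (T : ℝ)) * (((evenT k M).card : ℝ) * T + (M : ℝ) ^ k * θ) := step
    _ = ((evenT k M).card : ℝ) + (M : ℝ) ^ k * θ / T := by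
        field_simp
    _ ≤ ((M : ℝ) * ((k : ℝ) - 1)) ^ ((k : ℝ) / 2) + (M : ℝ) ^ k * θ / T := by
        linarith
end

section
/- Let s : ℕ → {-1, 1} be a binary sequence, let T, M, k be positive integers with k odd, and let θ ≥ 0 be a bound on all combined correlations of s of order at most k, i.e. for every 1 ≤ r ≤ k, every stride L ≥ 1, every tuple of shifts 0 ≤ d'_1 < ⋯ < d'_r, and every length T' ≤ T, one has |∑_{i=1}^{T'} s(L·i + d'_1) ⋯ s(L·i + d'_r)| ≤ θ. Then |(1/T) · ∑_{i=1}^{T} ( ∑_{n=1}^{M} s(i + n) )^k| ≤ M^k · θ / T. -/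
open Finset

lemma pm_pow_parity (x : ℝ) (hx : x ^ 2 = 1) (n : ℕ) :
    x ^ n = if Odd n then x else 1 := by
  rcases Nat.even_or_odd n with h | h
  · obtain ⟨m, rfl⟩ := h
    have hno : ¬ Odd (m + m) := by
      rw [Nat.not_odd_iff_even]; exact ⟨m, rfl⟩
    rw [if_neg hno, ← two_mul, pow_mul, hx, one_pow]
  · obtain ⟨m, rfl⟩ := h
    rw [if_pos ⟨m, rfl⟩, pow_add, pow_mul, hx, one_pow, pow_one, one_mul]

/-- Let `s : ℕ → {-1, 1}` be a binary sequence, `T, M, k` positive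
integers with `k` odd, and `θ ≥ 0` a bound on all combined correlations of `s` of
order at most `k`. Then
`|(1/T) · ∑_{i=1}^{T} (∑_{n=1}^{M} s(i+n))^k| ≤ M^k θ / T`. -/
theorem moment_bound_odd
    (s : ℕ → ℝ) (hs : ∀ i, s i = -1 ∨ s i = 1)
    (T M k : ℕ) (hT : 0 < T) (hM : 0 < M) (hk : 0 < k) (hkodd : Odd k)
    (θ : ℝ) (hθ : 0 ≤ θ)
    (hcorr : ∀ r : ℕ, 1 ≤ r → r ≤ k → ∀ L : ℕ, 1 ≤ L →
      ∀ d' : Fin r → ℕ, StrictMono d' → ∀ T' : ℕ, T' ≤ T →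
        |∑ i ∈ Finset.Icc 1 T', ∏ j : Fin r, s (L * i + d' j)| ≤ θ) :
    |(1 / (T : ℝ)) * ∑ i ∈ Finset.Icc 1 T, (∑ n ∈ Finset.Icc 1 M, s (i + n)) ^ k|
      ≤ (M : ℝ) ^ k * θ / (T : ℝ) := by
  have hsq : ∀ x, s x ^ 2 = 1 := fun x => by rcases hs x with h | h <;> simp [h]
  -- expand the power
  have hexp : ∀ i : ℕ, (∑ n ∈ Finset.Icc 1 M, s (i + n)) ^ k
      = ∑ p ∈ Fintype.piFinset (fun _ : Fin k => Finset.Icc 1 M),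
          ∏ j : Fin k, s (i + p j) := by
    intro i
    rw [← Fin.prod_const k, Finset.prod_univ_sum]
  have hswap : ∑ i ∈ Finset.Icc 1 T, (∑ n ∈ Finset.Icc 1 M, s (i + n)) ^ k
      = ∑ p ∈ Fintype.piFinset (fun _ : Fin k => Finset.Icc 1 M),
          ∑ i ∈ Finset.Icc 1 T, ∏ j : Fin k, s (i + p j) := by
    simp_rw [hexp]; exact Finset.sum_comm
  -- key bound for each tuple p
  have hkey : ∀ p : Fin k → ℕ,
      |∑ i ∈ Finset.Icc 1 T, ∏ j : Fin k, s (i + p j)| ≤ θ := by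
    intro p
    classical
    set V : Finset ℕ := Finset.image p Finset.univ with hV
    set D : Finset ℕ :=
      V.filter (fun v => Odd (Finset.univ.filter (fun j => p j = v)).card) with hD
    have hprod : ∀ i : ℕ, ∏ j : Fin k, s (i + p j) = ∏ v ∈ D, s (i + v) := by
      intro i
      rw [Finset.prod_comp (fun v => s (i + v)) p]
      rw [hD, Finset.prod_filter]
      refine Finset.prod_congr rfl fun v _ => ?_
      rw [pm_pow_parity _ (hsq _)]
    -- the set D is nonempty
    have hcard : Finset.univ.card
        = ∑ v ∈ V, (Finset.univ.filter (fun j => p j = v)).card :=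
      Finset.card_eq_sum_card_fiberwise fun x _ => Finset.mem_image_of_mem p (mem_univ x)
    have hDne : D.Nonempty := by
      by_contra hcon
      rw [Finset.not_nonempty_iff_eq_empty, hD, Finset.filter_eq_empty_iff] at hcon
      have : Even k := by
        have : Even (Finset.univ : Finset (Fin k)).card := by
          rw [hcard]
          exact Finset.even_sum _ fun v hv => Nat.not_odd_iff_even.1 (hcon hv)
        simpa using this
      exact (Nat.not_odd_iff_even.2 this) hkodd
    have hr1 : 1 ≤ D.card := Finset.card_pos.2 hDne
    have hrk : D.card ≤ k := by
      calc D.card ≤ V.card := Finset.card_filter_le _ _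
        _ ≤ (Finset.univ : Finset (Fin k)).card := Finset.card_image_le
        _ = k := by simp
    set e := D.orderEmbOfFin rfl with he
    have himg : Finset.image e Finset.univ = D := by
      ext v
      simp only [Finset.mem_image, Finset.mem_univ, true_and]
      constructor
      · rintro ⟨j, rfl⟩; exact Finset.orderEmbOfFin_mem _ _ _
      · intro hv
        have : v ∈ Set.range e := by
          rw [he, Finset.range_orderEmbOfFin]; exact hv
        obtain ⟨j, hj⟩ := this
        exact ⟨j, hj⟩
    have hprod2 : ∀ i : ℕ, ∏ v ∈ D, s (i + v) = ∏ j : Fin D.card, s (1 * i + e j) := by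
      intro i
      have h2 := Finset.prod_image (s := (Finset.univ : Finset (Fin D.card))) (g := e) (f := fun v => s (i + v))
        (fun a _ b _ h => e.injective h)
      rw [himg] at h2
      simp only [one_mul]
      exact h2
    have := hcorr D.card hr1 hrk 1 le_rfl e e.strictMono T le_rfl
    calc |∑ i ∈ Finset.Icc 1 T, ∏ j : Fin k, s (i + p j)|
        = |∑ i ∈ Finset.Icc 1 T, ∏ j : Fin D.card, s (1 * i + e j)| := by
          congr 1; exact Finset.sum_congr rfl fun i _ => by rw [hprod i, hprod2 i]
      _ ≤ θ := this
  -- put everything together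
  have hTpos : (0 : ℝ) < T := by exact_mod_cast hT
  rw [abs_mul, abs_of_pos (by positivity : (0:ℝ) < 1 / T), hswap]
  rw [div_eq_mul_one_div ((M:ℝ)^k * θ), mul_comm ((M:ℝ)^k * θ)]
  refine mul_le_mul_of_nonneg_left ?_ (by positivity)
  calc |∑ p ∈ Fintype.piFinset (fun _ : Fin k => Finset.Icc 1 M),
          ∑ i ∈ Finset.Icc 1 T, ∏ j : Fin k, s (i + p j)|
      ≤ ∑ p ∈ Fintype.piFinset (fun _ : Fin k => Finset.Icc 1 M),
          |∑ i ∈ Finset.Icc 1 T, ∏ j : Fin k, s (i + p j)| := Finset.abs_sum_le_sum_abs _ _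
    _ ≤ ∑ p ∈ Fintype.piFinset (fun _ : Fin k => Finset.Icc 1 M), θ :=
        Finset.sum_le_sum fun p _ => hkey p
    _ = (M : ℝ) ^ k * θ := by
        rw [Finset.sum_const, nsmul_eq_mul]
        congr 1
        rw [Fintype.card_piFinset]
        simp [Nat.card_Icc]
end

section
/- Let s : ℕ → {-1, 1} be a binary sequence, M, T positive integers, and define the real sequence S by S(i) = M^{-1/2} · ∑_{n=1}^{M} s(n + i·M). Let k be a positive even integer, let 0 ≤ d_1 < ⋯ < d_k be integer shifts, and let θ ≥ 0 be a bound on all combined correlations of s of order at most k, i.e. for every 1 ≤ r ≤ k, every stride L ≥ 1, every tuple of shifts 0 ≤ d'_1 < ⋯ < d'_r, and every length T' ≤ T, one has |∑_{i=1}^{T'} s(L·i + d'_1) ⋯ s(L·i + d'_r)| ≤ θ. Then |(1/T) · ∑_{i=1}^{T} S(i + d_1) ⋯ S(i + d_k)| ≤ (k-1)^{k/2} + M^{k/2} · θ / T. -/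
/-- Let `s : ℕ → {-1, 1}` be a binary sequence, `M, T` positive
integers, and `S(i) = M^{-1/2} · ∑_{n=1}^{M} s(n + i·M)`. Let `k` be a positive even
integer, `0 ≤ d_1 < ⋯ < d_k` integer shifts and `θ ≥ 0` a bound on all combined
correlations of `s` of order at most `k`. Then
`|(1/T) · ∑_{i=1}^{T} S(i+d_1) ⋯ S(i+d_k)| ≤ (k-1)^{k/2} + M^{k/2} θ / T`. -/
theorem product_moment_bound_even
    (s : ℕ → ℝ) (hs : ∀ i, s i = -1 ∨ s i = 1)
    (M T : ℕ) (hM : 0 < M) (hT : 0 < T)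
    (S : ℕ → ℝ)
    (hS : ∀ i, S i = (M : ℝ) ^ (-(1 / 2) : ℝ) * ∑ n ∈ Finset.Icc 1 M, s (n + i * M))
    (k : ℕ) (hk : 0 < k) (hkeven : Even k)
    (d : Fin k → ℕ) (hd : StrictMono d)
    (θ : ℝ) (hθ : 0 ≤ θ)
    (hcorr : ∀ r : ℕ, 1 ≤ r → r ≤ k → ∀ L : ℕ, 1 ≤ L →
      ∀ d' : Fin r → ℕ, StrictMono d' → ∀ T' : ℕ, T' ≤ T →
        |∑ i ∈ Finset.Icc 1 T', ∏ j : Fin r, s (L * i + d' j)| ≤ θ) :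
    |(1 / (T : ℝ)) * ∑ i ∈ Finset.Icc 1 T, ∏ j : Fin k, S (i + d j)|
      ≤ ((k : ℝ) - 1) ^ ((k : ℝ) / 2) + (M : ℝ) ^ ((k : ℝ) / 2) * θ / (T : ℝ) := by
  have hMR : (0 : ℝ) < M := by exact_mod_cast hM
  have hTR : (0 : ℝ) < T := by exact_mod_cast hT
  set c : ℝ := (M : ℝ) ^ (-(1 / 2) : ℝ) with hc
  have hc0 : 0 < c := Real.rpow_pos_of_pos hMR _
  -- expand the product of sums
  have hexp : ∀ i : ℕ, ∏ j : Fin k, S (i + d j)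
      = c ^ k * ∑ p ∈ Fintype.piFinset (fun _ : Fin k => Finset.Icc 1 M),
          ∏ j : Fin k, s (M * i + (p j + d j * M)) := by
    intro i
    have h1 : ∀ j : Fin k, S (i + d j)
        = c * ∑ n ∈ Finset.Icc 1 M, s (M * i + (n + d j * M)) := by
      intro j
      rw [hS]
      congr 1
      refine Finset.sum_congr rfl fun n _ => ?_
      congr 1
      ring
    rw [Finset.prod_congr rfl (fun j _ => h1 j), Finset.prod_mul_distrib,
      Finset.prod_const, Finset.card_univ, Fintype.card_fin,
      Finset.prod_univ_sum]
  have hsum : ∑ i ∈ Finset.Icc 1 T, ∏ j : Fin k, S (i + d j)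
      = c ^ k * ∑ p ∈ Fintype.piFinset (fun _ : Fin k => Finset.Icc 1 M),
          ∑ i ∈ Finset.Icc 1 T, ∏ j : Fin k, s (M * i + (p j + d j * M)) := by
    simp_rw [hexp, ← Finset.mul_sum]
    rw [Finset.sum_comm]
  -- bound each inner correlation by θ
  have hbound : |∑ i ∈ Finset.Icc 1 T, ∏ j : Fin k, S (i + d j)|
      ≤ (M : ℝ) ^ ((k : ℝ) / 2) * θ := by
    rw [hsum, abs_mul, abs_of_pos (pow_pos hc0 k)]
    have h2 : |∑ p ∈ Fintype.piFinset (fun _ : Fin k => Finset.Icc 1 M),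
          ∑ i ∈ Finset.Icc 1 T, ∏ j : Fin k, s (M * i + (p j + d j * M))|
        ≤ (M : ℝ) ^ k * θ := by
      calc |∑ p ∈ Fintype.piFinset (fun _ : Fin k => Finset.Icc 1 M),
              ∑ i ∈ Finset.Icc 1 T, ∏ j : Fin k, s (M * i + (p j + d j * M))|
          ≤ ∑ p ∈ Fintype.piFinset (fun _ : Fin k => Finset.Icc 1 M),
              |∑ i ∈ Finset.Icc 1 T, ∏ j : Fin k, s (M * i + (p j + d j * M))| :=
            Finset.abs_sum_le_sum_abs _ _
        _ ≤ ∑ _p ∈ Fintype.piFinset (fun _ : Fin k => Finset.Icc 1 M), θ := by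
            refine Finset.sum_le_sum fun p hp => ?_
            have hmem : ∀ j, p j ∈ Finset.Icc 1 M := by
              rw [Fintype.mem_piFinset] at hp; exact hp
            have hmono : StrictMono (fun j : Fin k => p j + d j * M) := by
              intro j j' hjj'
              obtain ⟨h1, h2⟩ := Finset.mem_Icc.mp (hmem j)
              obtain ⟨h1', h2'⟩ := Finset.mem_Icc.mp (hmem j')
              have hdd : d j + 1 ≤ d j' := hd hjj'
              calc p j + d j * M ≤ M + d j * M := by omega
                _ = (d j + 1) * M := by ring
                _ ≤ d j' * M := Nat.mul_le_mul_right M hdd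
                _ < p j' + d j' * M := by omega
            exact hcorr k hk le_rfl M hM (fun j => p j + d j * M) hmono T le_rfl
        _ = (M : ℝ) ^ k * θ := by
            rw [Finset.sum_const, nsmul_eq_mul]
            congr 1
            simp [Nat.card_Icc]
    calc c ^ k * |∑ p ∈ Fintype.piFinset (fun _ : Fin k => Finset.Icc 1 M),
            ∑ i ∈ Finset.Icc 1 T, ∏ j : Fin k, s (M * i + (p j + d j * M))|
        ≤ c ^ k * ((M : ℝ) ^ k * θ) := by
          exact mul_le_mul_of_nonneg_left h2 (pow_pos hc0 k).le
      _ = (M : ℝ) ^ ((k : ℝ) / 2) * θ := by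
          rw [← mul_assoc]
          congr 1
          rw [hc, ← Real.rpow_natCast ((M : ℝ) ^ (-(1 / 2) : ℝ)) k,
            ← Real.rpow_mul hMR.le, ← Real.rpow_natCast (M : ℝ) k,
            ← Real.rpow_add hMR]
          congr 1
          ring
  have hk1 : (0 : ℝ) ≤ ((k : ℝ) - 1) ^ ((k : ℝ) / 2) := by
    apply Real.rpow_nonneg
    have : (1 : ℝ) ≤ k := by exact_mod_cast hk
    linarith
  calc |(1 / (T : ℝ)) * ∑ i ∈ Finset.Icc 1 T, ∏ j : Fin k, S (i + d j)|
      = (1 / (T : ℝ)) * |∑ i ∈ Finset.Icc 1 T, ∏ j : Fin k, S (i + d j)| := by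
        rw [abs_mul, abs_of_pos (by positivity : (0:ℝ) < 1 / (T:ℝ))]
    _ ≤ (1 / (T : ℝ)) * ((M : ℝ) ^ ((k : ℝ) / 2) * θ) := by
        exact mul_le_mul_of_nonneg_left hbound (by positivity)
    _ = (M : ℝ) ^ ((k : ℝ) / 2) * θ / (T : ℝ) := by ring
    _ ≤ ((k : ℝ) - 1) ^ ((k : ℝ) / 2) + (M : ℝ) ^ ((k : ℝ) / 2) * θ / (T : ℝ) := by
        linarith
end

section
/- Let s : ℕ → {-1, 1} be a binary sequence, M, T positive integers, and define the real sequence S by S(i) = M^{-1/2} · ∑_{n=1}^{M} s(n + i·M). Let k be a positive odd integer, let 0 ≤ d_1 < ⋯ < d_k be integer shifts, and let θ ≥ 0 be a bound on all combined correlations of s of order at most k, i.e. for every 1 ≤ r ≤ k, every stride L ≥ 1, every tuple of shifts 0 ≤ d'_1 < ⋯ < d'_r, and every length T' ≤ T, one has |∑_{i=1}^{T'} s(L·i + d'_1) ⋯ s(L·i + d'_r)| ≤ θ. Then |(1/T) · ∑_{i=1}^{T} S(i + d_1) ⋯ S(i + d_k)| ≤ M^{k/2} · θ / T. -/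
/-- Let `s : ℕ → {-1, 1}` be a binary sequence, `M, T` positive
integers, and `S(i) = M^{-1/2} · ∑_{n=1}^{M} s(n + i·M)`. Let `k` be a positive odd
integer, `0 ≤ d_1 < ⋯ < d_k` integer shifts and `θ ≥ 0` a bound on all combined
correlations of `s` of order at most `k`. Then
`|(1/T) · ∑_{i=1}^{T} S(i+d_1) ⋯ S(i+d_k)| ≤ M^{k/2} θ / T`. -/
theorem product_moment_bound_odd
    (s : ℕ → ℝ) (hs : ∀ i, s i = -1 ∨ s i = 1)
    (M T : ℕ) (hM : 0 < M) (hT : 0 < T)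
    (S : ℕ → ℝ)
    (hS : ∀ i, S i = (M : ℝ) ^ (-(1 / 2) : ℝ) * ∑ n ∈ Finset.Icc 1 M, s (n + i * M))
    (k : ℕ) (hk : 0 < k) (hkodd : Odd k)
    (d : Fin k → ℕ) (hd : StrictMono d)
    (θ : ℝ) (hθ : 0 ≤ θ)
    (hcorr : ∀ r : ℕ, 1 ≤ r → r ≤ k → ∀ L : ℕ, 1 ≤ L →
      ∀ d' : Fin r → ℕ, StrictMono d' → ∀ T' : ℕ, T' ≤ T →
        |∑ i ∈ Finset.Icc 1 T', ∏ j : Fin r, s (L * i + d' j)| ≤ θ) :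
    |(1 / (T : ℝ)) * ∑ i ∈ Finset.Icc 1 T, ∏ j : Fin k, S (i + d j)|
      ≤ (M : ℝ) ^ ((k : ℝ) / 2) * θ / (T : ℝ) := by
  have hM0 : (0:ℝ) < (M:ℝ) := by exact_mod_cast hM
  have hT0 : (0:ℝ) < (T:ℝ) := by exact_mod_cast hT
  have key : |∑ i ∈ Finset.Icc 1 T, ∏ j : Fin k, S (i + d j)|
      ≤ (M:ℝ) ^ ((k:ℝ)/2) * θ := by
    have expand : ∀ i : ℕ, ∏ j : Fin k, S (i + d j)
        = (M:ℝ) ^ (-((k:ℝ)/2)) *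
          ∑ x ∈ Fintype.piFinset (fun _ : Fin k => Finset.Icc 1 M),
            ∏ j : Fin k, s (x j + (i + d j) * M) := by
      intro i
      calc ∏ j : Fin k, S (i + d j)
          = ∏ j : Fin k, ((M:ℝ) ^ (-(1/2) : ℝ) *
              ∑ n ∈ Finset.Icc 1 M, s (n + (i + d j) * M)) := by
            exact Finset.prod_congr rfl fun j _ => hS _
        _ = ((M:ℝ) ^ (-(1/2):ℝ))^k *
              ∏ j : Fin k, ∑ n ∈ Finset.Icc 1 M, s (n + (i + d j) * M) := by
            rw [Finset.prod_mul_distrib, Finset.prod_const, Finset.card_univ,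
              Fintype.card_fin]
        _ = (M:ℝ) ^ (-((k:ℝ)/2)) *
              ∑ x ∈ Fintype.piFinset (fun _ : Fin k => Finset.Icc 1 M),
                ∏ j : Fin k, s (x j + (i + d j) * M) := by
            rw [Finset.prod_univ_sum, ← Real.rpow_natCast ((M:ℝ) ^ (-(1/2):ℝ)) k,
              ← Real.rpow_mul hM0.le,
              show (-(1/2) : ℝ) * (k:ℝ) = -((k:ℝ)/2) by ring]
    have hsum : (∑ i ∈ Finset.Icc 1 T, ∏ j : Fin k, S (i + d j))
        = (M:ℝ) ^ (-((k:ℝ)/2)) *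
          ∑ x ∈ Fintype.piFinset (fun _ : Fin k => Finset.Icc 1 M),
            ∑ i ∈ Finset.Icc 1 T, ∏ j : Fin k, s (x j + (i + d j) * M) := by
      simp only [expand]
      rw [← Finset.mul_sum, Finset.sum_comm]
    rw [hsum, abs_mul, abs_of_pos (Real.rpow_pos_of_pos hM0 _)]
    have hinner : ∀ x ∈ Fintype.piFinset (fun _ : Fin k => Finset.Icc 1 M),
        |∑ i ∈ Finset.Icc 1 T, ∏ j : Fin k, s (x j + (i + d j) * M)| ≤ θ := by
      intro x hx
      have hxm : ∀ j, x j ∈ Finset.Icc 1 M := Fintype.mem_piFinset.mp hx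
      have hmono : StrictMono (fun j : Fin k => x j + d j * M) := by
        intro a b hab
        have h1 : x a ≤ M := (Finset.mem_Icc.mp (hxm a)).2
        have h2 : 1 ≤ x b := (Finset.mem_Icc.mp (hxm b)).1
        have h3 : d a + 1 ≤ d b := hd hab
        have : x a + d a * M ≤ (d a + 1) * M := by
          calc x a + d a * M ≤ M + d a * M := by omega
            _ = (d a + 1) * M := by ring
        calc x a + d a * M ≤ (d a + 1) * M := this
          _ ≤ d b * M := Nat.mul_le_mul_right M h3
          _ < x b + d b * M := by omega
      have := hcorr k hk (le_refl k) M hM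
        (fun j : Fin k => x j + d j * M) hmono T (le_refl T)
      calc |∑ i ∈ Finset.Icc 1 T, ∏ j : Fin k, s (x j + (i + d j) * M)|
          = |∑ i ∈ Finset.Icc 1 T, ∏ j : Fin k, s (M * i + (x j + d j * M))| := by
            congr 1
            refine Finset.sum_congr rfl fun i _ => Finset.prod_congr rfl fun j _ => ?_
            congr 1
            ring
        _ ≤ θ := this
    calc (M:ℝ) ^ (-((k:ℝ)/2)) *
          |∑ x ∈ Fintype.piFinset (fun _ : Fin k => Finset.Icc 1 M),
            ∑ i ∈ Finset.Icc 1 T, ∏ j : Fin k, s (x j + (i + d j) * M)|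
        ≤ (M:ℝ) ^ (-((k:ℝ)/2)) *
          ∑ x ∈ Fintype.piFinset (fun _ : Fin k => Finset.Icc 1 M), θ := by
          refine mul_le_mul_of_nonneg_left ?_ (Real.rpow_pos_of_pos hM0 _).le
          exact (Finset.abs_sum_le_sum_abs _ _).trans (Finset.sum_le_sum hinner)
      _ = (M:ℝ) ^ ((k:ℝ)/2) * θ := by
          rw [Finset.sum_const, Fintype.card_piFinset]
          simp only [Nat.card_Icc, Nat.add_sub_cancel, Finset.prod_const,
            Finset.card_univ, Fintype.card_fin, nsmul_eq_mul]
          push_cast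
          rw [← Real.rpow_natCast (M:ℝ) k, ← mul_assoc, ← Real.rpow_add hM0,
            show -((k:ℝ)/2) + (k:ℝ) = (k:ℝ)/2 by ring]
  rw [abs_mul, abs_of_pos (by positivity : (0:ℝ) < 1/(T:ℝ))]
  calc 1/(T:ℝ) * |∑ i ∈ Finset.Icc 1 T, ∏ j : Fin k, S (i + d j)|
      ≤ 1/(T:ℝ) * ((M:ℝ)^((k:ℝ)/2)*θ) := mul_le_mul_of_nonneg_left key (by positivity)
    _ = (M:ℝ)^((k:ℝ)/2)*θ/(T:ℝ) := by ring
end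

section
/- Let M and k be positive integers with k even. The number of k-tuples (d_1, …, d_k) ∈ {1, …, M}^k in which every value occurs an even number of times is at most (M·(k-1))^{k/2}. -/
open List

/-- Lists of length `k` with entries in `[1,M]` and all counts even. -/
abbrev EvenTuples (k M : ℕ) : Type :=
  {l : List ℕ // l.length = k ∧ (∀ x ∈ l, x ∈ Finset.Icc 1 M) ∧ ∀ v : ℕ, Even (l.count v)}

lemma evenTuples_finite (k M : ℕ) : Finite (EvenTuples k M) := by
  have : Function.Injective (fun l : EvenTuples k M =>
      (fun i : Fin k => ⟨l.1.get (Fin.cast l.2.1.symm i),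
        l.2.2.1 _ (l.1.get_mem _)⟩ : Fin k → {x // x ∈ Finset.Icc 1 M})) := by
    rintro ⟨l, hl, hl2⟩ ⟨m, hm, hm2⟩ h
    apply Subtype.ext
    apply List.ext_get (hl.trans hm.symm)
    intro i h1 h2
    have := congrFun h ⟨i, by omega⟩
    simpa using congrArg Subtype.val this
  exact Finite.of_injective _ this

lemma insertIdx_indexOf_erase {a : ℕ} {t : List ℕ} (h : a ∈ t) :
    List.insertIdx (t.erase a) (t.idxOf a) a = t := by
  induction t with
  | nil => simp at h
  | cons b s ih =>
    by_cases hba : b = a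
    · subst hba
      simp [List.idxOf_cons_self, List.erase_cons_head]
    · have ha : a ∈ s := by
        rcases List.mem_cons.mp h with h' | h'
        · exact absurd h'.symm hba
        · exact h'
      rw [List.idxOf_cons_ne _ (by exact hba), List.erase_cons_tail (by simp [hba])]
      rw [List.insertIdx_succ_cons, ih ha]

lemma eq_headI_cons_tail {L : List ℕ} (h : L ≠ []) : L = L.headI :: L.tail := by
  cases L with
  | nil => exact absurd rfl h
  | cons a t => rfl

lemma headI_mem_tail {k M : ℕ} (l : EvenTuples (k + 2) M) : l.1.headI ∈ l.1.tail := by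
  obtain ⟨L, hlen, hmem, hcount⟩ := l
  obtain ⟨a, t, rfl⟩ : ∃ a t, L = a :: t := by
    cases L with
    | nil => simp at hlen
    | cons a t => exact ⟨a, t, rfl⟩
  simp only [headI_cons, tail_cons]
  have h1 := hcount a
  rw [count_cons_self] at h1
  rw [← List.count_pos_iff]
  rcases h1 with ⟨n, hn⟩
  omega

lemma ne_nil {k M : ℕ} (l : EvenTuples (k + 2) M) : l.1 ≠ [] :=
  List.ne_nil_of_length_pos (by rw [l.2.1]; omega)

lemma tail_length {k M : ℕ} (l : EvenTuples (k + 2) M) : l.1.tail.length = k + 1 := by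
  rw [List.length_tail, l.2.1]; omega

/-- The step map. -/
def fstep (k M : ℕ) (l : EvenTuples (k + 2) M) : Fin (k + 1) × Fin M × EvenTuples k M :=
  (⟨l.1.tail.idxOf l.1.headI, by
      have h := List.idxOf_lt_length_iff.2 (headI_mem_tail l)
      rw [tail_length l] at h; exact h⟩,
   ⟨l.1.headI - 1, by
      have h := l.2.2.1 _ (List.mem_of_mem_tail (headI_mem_tail l))
      rw [Finset.mem_Icc] at h
      omega⟩,
   ⟨l.1.tail.erase l.1.headI, by
      have h := List.length_erase_add_one (headI_mem_tail l)
      have h2 := tail_length l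
      omega,
    fun x hx => l.2.2.1 x (List.mem_of_mem_tail (List.mem_of_mem_erase hx)),
    by
      intro v
      have hc : Even (List.count v (l.1.headI :: l.1.tail)) := by
        rw [← eq_headI_cons_tail (ne_nil l)]; exact l.2.2.2 v
      by_cases hv : v = l.1.headI
      · subst hv
        rw [List.count_erase_self]
        rw [count_cons_self] at hc
        have h1 : 0 < l.1.tail.count l.1.headI := List.count_pos_iff.2 (headI_mem_tail l)
        rcases hc with ⟨n, hn⟩
        exact ⟨n - 1, by omega⟩
      · rw [List.count_erase_of_ne hv]
        rw [List.count_cons_of_ne (Ne.symm hv)] at hc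
        exact hc⟩)

lemma fstep_injective (k M : ℕ) : Function.Injective (fstep k M) := by
  intro l m h
  have hlmem := l.2.2.1 _ (List.mem_of_mem_tail (headI_mem_tail l))
  have hmmem := m.2.2.1 _ (List.mem_of_mem_tail (headI_mem_tail m))
  rw [Finset.mem_Icc] at hlmem hmmem
  simp only [fstep, Prod.mk.injEq, Fin.mk.injEq, Subtype.mk.injEq] at h
  obtain ⟨h1, h2, h3⟩ := h
  have hhead : l.1.headI = m.1.headI := by omega
  have htail : l.1.tail = m.1.tail := by
    rw [← insertIdx_indexOf_erase (headI_mem_tail l),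
        ← insertIdx_indexOf_erase (headI_mem_tail m), h1, h3, hhead]
  apply Subtype.ext
  rw [eq_headI_cons_tail (ne_nil l), eq_headI_cons_tail (ne_nil m), hhead, htail]

lemma step (k M : ℕ) :
    Nat.card (EvenTuples (k + 2) M) ≤ (k + 1) * M * Nat.card (EvenTuples k M) := by
  have := evenTuples_finite k M
  calc Nat.card (EvenTuples (k + 2) M)
      ≤ Nat.card (Fin (k + 1) × Fin M × EvenTuples k M) :=
        Nat.card_le_card_of_injective _ (fstep_injective k M)
    _ = (k + 1) * M * Nat.card (EvenTuples k M) := by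
        simp [Nat.card_prod, mul_assoc]

lemma base (M : ℕ) : Nat.card (EvenTuples 0 M) = 1 := by
  have : ∀ l : EvenTuples 0 M, l = ⟨[], by simp⟩ := by
    rintro ⟨l, hl, -⟩
    apply Subtype.ext
    exact List.length_eq_zero_iff.mp hl
  rw [Nat.card_eq_one_iff_unique]
  exact ⟨⟨fun a b => (this a).trans (this b).symm⟩, ⟨⟨[], by simp⟩⟩⟩

lemma main_bound (M : ℕ) : ∀ m : ℕ, Nat.card (EvenTuples (2 * m) M) ≤ (M * (2 * m - 1)) ^ m := by
  intro m
  induction m with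
  | zero => simp [base]
  | succ n ih =>
    have h1 : 2 * (n + 1) = 2 * n + 2 := by ring
    have h2 : 2 * n + 2 - 1 = 2 * n + 1 := by omega
    rw [h1]; rw [h2]
    calc Nat.card (EvenTuples (2 * n + 2) M)
        ≤ (2 * n + 1) * M * Nat.card (EvenTuples (2 * n) M) := step _ _
      _ ≤ (2 * n + 1) * M * (M * (2 * n - 1)) ^ n :=
          Nat.mul_le_mul_left _ ih
      _ ≤ (2 * n + 1) * M * (M * (2 * n + 1)) ^ n := by
          apply Nat.mul_le_mul_left
          apply Nat.pow_le_pow_left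
          apply Nat.mul_le_mul_left
          omega
      _ = (M * (2 * n + 1)) ^ (n + 1) := by
          rw [pow_succ]
          ring

lemma count_ofFn_eq {k : ℕ} (d : Fin k → ℕ) (v : ℕ) :
    (List.ofFn d).count v = (Finset.univ.filter (fun j : Fin k => d j = v)).card := by
  rw [List.ofFn_eq_map, List.count, List.countP_map, Finset.card_filter]
  rw [Fin.univ_def]
  simp only [Finset.sum, Multiset.map_coe, Multiset.sum_coe, List.countP_eq_length_filter]
  induction List.finRange k with
  | nil => simp
  | cons a t ih =>
    by_cases h : d a = v <;>
      simp [List.filter_cons, h, ih, Function.comp, Nat.add_comm]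


/-- Let `M` and `k` be positive integers with `k` even. The number of
`k`-tuples `(d_1, …, d_k) ∈ {1, …, M}^k` in which every value occurs an even number of
times is at most `(M·(k-1))^{k/2}`. -/
theorem count_even_multiplicity_tuples
    (M k : ℕ) (hM : 0 < M) (hk : 0 < k) (hkeven : Even k) :
    Nat.card {d : Fin k → ℕ // (∀ j, d j ∈ Finset.Icc 1 M) ∧
        ∀ v ∈ Finset.Icc 1 M,
          Even ((Finset.univ.filter (fun j : Fin k => d j = v)).card)}
      ≤ (M * (k - 1)) ^ (k / 2) := by
  obtain ⟨m, hm⟩ := hkeven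
  have hk2 : k = 2 * m := by omega
  subst hm
  have hfin := evenTuples_finite (m + m) M
  have hinj : Function.Injective (fun d : {d : Fin (m + m) → ℕ // (∀ j, d j ∈ Finset.Icc 1 M) ∧
        ∀ v ∈ Finset.Icc 1 M,
          Even ((Finset.univ.filter (fun j : Fin (m + m) => d j = v)).card)} =>
      (⟨List.ofFn d.1, by simp, fun x hx => by
          obtain ⟨i, rfl⟩ := List.mem_ofFn.mp hx
          exact d.2.1 i,
        fun v => by
          by_cases hv : v ∈ Finset.Icc 1 M
          · rw [count_ofFn_eq]; exact d.2.2 v hv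
          · rw [List.count_eq_zero.mpr]
            · exact Even.zero
            · intro hmem
              obtain ⟨i, rfl⟩ := List.mem_ofFn.mp hmem
              exact hv (d.2.1 i)⟩ : EvenTuples (m + m) M)) := by
    intro a b h
    apply Subtype.ext
    exact List.ofFn_injective (congrArg Subtype.val h)
  calc Nat.card _ ≤ Nat.card (EvenTuples (m + m) M) :=
        Nat.card_le_card_of_injective _ hinj
    _ ≤ (M * (2 * m - 1)) ^ m := by
        have : m + m = 2 * m := by omega
        rw [this]; exact main_bound M m
    _ = (M * (m + m - 1)) ^ ((m + m) / 2) := by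
        have e1 : 2 * m - 1 = m + m - 1 := by omega
        have e2 : (m + m) / 2 = m := by omega
        rw [e1, e2]
end
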